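/- Let (Ω, *, I) be a (not necessarily commutative) unital quantale with residuation a → b = ⋁{r : a * r ≤ b}, so that Ω(a,b) = a → b makes Ω an Ω-category. If the dual structure Ωᵒᵖ(a,b) = b → a is also an Ω-category (i.e., satisfies the transitivity inequality Ωᵒᵖ(a,b) * Ωᵒᵖ(b,c) ≤ Ωᵒᵖ(a,c) and I ≤ Ωᵒᵖ(a,a)), then * is commutative. -/
import Mathlib


/-- A (not necessarily commutative) unital quantale: a complete lattice with a
monoid structure such that left multiplication preserves arbitrary joins. -/
class UnitalQuantale (Q : Type*) extends CompleteLattice Q, Monoid Q where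
  mul_sSup : ∀ (a : Q) (s : Set Q), a * sSup s = ⨆ b ∈ s, a * b

/-- Residuation `a → b = ⋁ {r | a * r ≤ b}`. -/
def qres {Q : Type*} [UnitalQuantale Q] (a b : Q) : Q := sSup {r | a * r ≤ b}

section Aux
variable {Q : Type*} [UnitalQuantale Q]

lemma qaux_le_qres {a b r : Q} (h : a * r ≤ b) : r ≤ qres a b := le_sSup h

/-- left multiplication is monotone. -/
lemma qaux_mul_le_mul_left (a : Q) {x y : Q} (h : x ≤ y) : a * x ≤ a * y := by
  have h1 : sSup ({x, y} : Set Q) = y := by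
    rw [sSup_pair, sup_eq_right.mpr h]
  calc a * x ≤ ⨆ c ∈ ({x, y} : Set Q), a * c := by
        apply le_biSup (f := fun c => a * c); simp
    _ = a * sSup ({x, y} : Set Q) := (UnitalQuantale.mul_sSup a _).symm
    _ = a * y := by rw [h1]

lemma qaux_mul_qres_le (a b : Q) : a * qres a b ≤ b := by
  rw [qres, UnitalQuantale.mul_sSup]
  exact iSup₂_le fun r hr => hr

lemma qaux_qres_one (b : Q) : qres 1 b = b := by
  apply le_antisymm
  · exact sSup_le fun r hr => by simpa using hr
  · exact le_sSup (by simp)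

lemma qaux_key (htrans : ∀ a b c : Q, qres b a * qres c b ≤ qres c a)
    (a b : Q) : a * b ≤ b * a := by
  -- right monotonicity from htrans
  have rmono : ∀ x y c : Q, x ≤ y → x * c ≤ y * c := by
    intro x y c hxy
    have h1 : c ≤ qres y (y * c) := qaux_le_qres le_rfl
    have h2 : (1 : Q) ≤ qres x y := qaux_le_qres (by simpa using hxy)
    have h3 : c ≤ qres y (y * c) * qres x y :=
      h1.trans (by simpa using qaux_mul_le_mul_left (qres y (y * c)) h2)
    have h4 : c ≤ qres x (y * c) := h3.trans (htrans (y * c) y x)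
    calc x * c ≤ x * qres x (y * c) := qaux_mul_le_mul_left x h4
      _ ≤ y * c := qaux_mul_qres_le x (y * c)
  have ha : a ≤ qres b (b * a) := qaux_le_qres le_rfl
  have h5 := htrans (b * a) b 1
  rw [qaux_qres_one, qaux_qres_one] at h5
  exact (rmono a (qres b (b * a)) b ha).trans h5

end Aux

/-- If the dual structure `Ωᵒᵖ(a,b) = b → a` is also an Ω-category
(reflexivity and transitivity), then the quantale multiplication is commutative. -/
theorem dual_omega_category_implies_comm {Q : Type*} [UnitalQuantale Q]
    (hrefl : ∀ a : Q, (1 : Q) ≤ qres a a)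
    (htrans : ∀ a b c : Q, qres b a * qres c b ≤ qres c a) :
    ∀ a b : Q, a * b = b * a := fun a b =>
  le_antisymm (qaux_key htrans a b) (qaux_key htrans b a)
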